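/- arXiv:2605.28080 — 4 statements merged into one kernel-verified Lean document; each statement's English description precedes it below -/
import Mathlib

section
/- Let ω be a radial weight on the unit disc (a nonnegative integrable function on [0,1)) with ω̂(r) = ∫_r^1 ω(s)ds > 0 for all r. Then ω ∈ D̂ (i.e. there exists C with ω̂(r) ≤ C ω̂((1+r)/2) for all r) if and only if there exist C ≥ 1 and α > 0 such that ω̂(s) ≤ C ((1-s)/(1-t))^α ω̂(t) for all 0 ≤ s ≤ t < 1. -/
open Real MeasureTheory

/-- Tail of a radial weight: `ω̂(r) = ∫_r^1 ω(s) ds`. -/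
noncomputable def tailW (ω : ℝ → ℝ) (r : ℝ) : ℝ := ∫ s in r..(1:ℝ), ω s

/-- for a radial weight `ω` with positive tail, `ω ∈ D̂`
(`ω̂(r) ≤ C ω̂((1+r)/2)`) iff there are `C ≥ 1` and `α > 0` with
`ω̂(s) ≤ C ((1-s)/(1-t))^α ω̂(t)` for all `0 ≤ s ≤ t < 1`. -/
theorem statement8 (ω : ℝ → ℝ) (hω0 : ∀ r ∈ Set.Icc (0:ℝ) 1, 0 ≤ ω r)
    (hInt : IntegrableOn ω (Set.Ico (0:ℝ) 1))
    (hpos : ∀ r ∈ Set.Ico (0:ℝ) 1, 0 < tailW ω r) :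
    (∃ C : ℝ, 0 < C ∧ ∀ r ∈ Set.Ico (0:ℝ) 1, tailW ω r ≤ C * tailW ω ((1+r)/2)) ↔
    (∃ C : ℝ, 1 ≤ C ∧ ∃ α : ℝ, 0 < α ∧ ∀ s t : ℝ, 0 ≤ s → s ≤ t → t < 1 →
      tailW ω s ≤ C * ((1-s)/(1-t)) ^ α * tailW ω t) := by
  classical
  have hIcc : IntegrableOn ω (Set.Icc (0:ℝ) 1) :=
    (integrableOn_Icc_iff_integrableOn_Ico).mpr hInt
  have hInt' : ∀ a b : ℝ, 0 ≤ a → a ≤ b → b ≤ 1 → IntervalIntegrable ω volume a b := by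
    intro a b ha hab hb1
    rw [intervalIntegrable_iff_integrableOn_Ioc_of_le hab]
    exact hIcc.mono_set (fun x hx => ⟨le_trans ha (le_of_lt hx.1), hx.2.trans hb1⟩)
  have hmono : ∀ s t : ℝ, 0 ≤ s → s ≤ t → t ≤ 1 → tailW ω t ≤ tailW ω s := by
    intro s t hs hst ht
    have h1 : (∫ x in s..t, ω x) + tailW ω t = tailW ω s :=
      intervalIntegral.integral_add_adjacent_intervals (hInt' s t hs hst ht)
        (hInt' t 1 (hs.trans hst) ht le_rfl)
    have h2 : 0 ≤ ∫ x in s..t, ω x :=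
      intervalIntegral.integral_nonneg hst (fun x hx => hω0 x ⟨hs.trans hx.1, hx.2.trans ht⟩)
    linarith
  constructor
  · rintro ⟨C, hCpos, hC⟩
    set C' := max C 2 with hC'def
    have hC'2 : (2:ℝ) ≤ C' := le_max_right _ _
    have hC'1 : (1:ℝ) ≤ C' := by linarith
    have hC'pos : (0:ℝ) < C' := by linarith
    have hC' : ∀ r ∈ Set.Ico (0:ℝ) 1, tailW ω r ≤ C' * tailW ω ((1+r)/2) := by
      intro r hr
      have h1 := hC r hr
      have hpos2 : 0 ≤ tailW ω ((1+r)/2) :=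
        (hpos _ ⟨by linarith [hr.1], by linarith [hr.2]⟩).le
      exact h1.trans (mul_le_mul_of_nonneg_right (le_max_left C 2) hpos2)
    set α := Real.logb 2 C' with hα
    have hαpos : 0 < α := by
      have h1 : (1:ℝ) = Real.logb 2 2 := (Real.logb_self_eq_one (by norm_num : (1:ℝ) < 2)).symm
      have h2 : Real.logb 2 2 ≤ Real.logb 2 C' :=
        Real.logb_le_logb_of_le (by norm_num : (1:ℝ) < 2) (by norm_num) hC'2
      rw [hα]; linarith
    have hC'eq : C' = (2:ℝ) ^ α := (Real.rpow_logb (by norm_num) (by norm_num) hC'pos).symm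
    have hiter : ∀ n : ℕ, ∀ r, r ∈ Set.Ico (0:ℝ) 1 →
        tailW ω r ≤ C'^n * tailW ω (1 - (1-r)/2^n) := by
      intro n
      induction n with
      | zero => intro r hr; simp
      | succ m ih =>
        intro r hr
        have h2m : (1:ℝ) ≤ 2^m := one_le_pow₀ (by norm_num)
        have hrm : (1 - (1-r)/2^m) ∈ Set.Ico (0:ℝ) 1 := by
          constructor
          · have h1 : (1-r)/2^m ≤ 1-r := div_le_self (by linarith [hr.2]) h2m
            linarith [hr.1]
          · have : 0 < (1-r)/2^m := div_pos (by linarith [hr.2]) (by positivity)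
            linarith
        have h1 := ih r hr
        have h2 := hC' _ hrm
        have heq : (1 + (1 - (1-r)/2^m))/2 = 1 - (1-r)/2^(m+1) := by
          rw [pow_succ]; field_simp; ring
        rw [heq] at h2
        calc tailW ω r ≤ C'^m * tailW ω (1 - (1-r)/2^m) := h1
          _ ≤ C'^m * (C' * tailW ω (1 - (1-r)/2^(m+1))) :=
              mul_le_mul_of_nonneg_left h2 (by positivity)
          _ = C'^(m+1) * tailW ω (1 - (1-r)/2^(m+1)) := by ring
    refine ⟨C', hC'1, α, hαpos, ?_⟩
    intro s t hs hst ht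
    have hs1 : s < 1 := lt_of_le_of_lt hst ht
    have h1t : 0 < 1 - t := by linarith
    have h1s : 0 < 1 - s := by linarith
    have hratio1 : 1 ≤ (1-s)/(1-t) := (one_le_div h1t).mpr (by linarith)
    have hex : ∃ k : ℕ, (1-s)/(1-t) ≤ 2^k := by
      obtain ⟨k, hk⟩ := pow_unbounded_of_one_lt ((1-s)/(1-t)) (by norm_num : (1:ℝ) < 2)
      exact ⟨k, hk.le⟩
    set n := Nat.find hex with hn_def
    have hn : (1-s)/(1-t) ≤ 2^n := Nat.find_spec hex
    have hpt : t ≤ 1 - (1-s)/2^n := by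
      have hle : (1-s)/2^n ≤ 1-t := by
        rw [div_le_iff₀ (by positivity)]
        calc 1-s = ((1-s)/(1-t)) * (1-t) := by field_simp
          _ ≤ 2^n * (1-t) := mul_le_mul_of_nonneg_right hn h1t.le
          _ = (1-t) * 2^n := by ring
      linarith
    have hlt1 : 1 - (1-s)/2^n < 1 := by
      have : 0 < (1-s)/2^n := div_pos h1s (by positivity)
      linarith
    have h1 := hiter n s ⟨hs, hs1⟩
    have h2 := hmono t (1 - (1-s)/2^n) (by linarith) hpt hlt1.le
    have hrat_nonneg : 0 ≤ (1-s)/(1-t) := by positivity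
    have hCn : (C':ℝ)^n ≤ C' * ((1-s)/(1-t))^α := by
      have key : (C':ℝ)^n = ((2:ℝ)^n) ^ α := by
        rw [hC'eq, ← Real.rpow_natCast ((2:ℝ)^α) n, ← Real.rpow_natCast (2:ℝ) n,
          ← Real.rpow_mul (by norm_num), ← Real.rpow_mul (by norm_num), mul_comm]
      rcases Nat.eq_zero_or_pos n with h0 | hposn
      · rw [h0, pow_zero]
        have h3 : (1:ℝ) ≤ ((1-s)/(1-t))^α := Real.one_le_rpow hratio1 hαpos.le
        nlinarith
      · obtain ⟨m, hm⟩ := Nat.exists_eq_succ_of_ne_zero hposn.ne'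
        have hmin : ¬ ((1-s)/(1-t) ≤ 2^m) := by
          have := Nat.find_min hex (m := m) (by omega)
          exact this
        push_neg at hmin
        have h2n : ((2:ℝ)^n) ≤ 2 * ((1-s)/(1-t)) := by
          rw [hm, pow_succ]
          nlinarith
        rw [key]
        calc ((2:ℝ)^n)^α ≤ (2 * ((1-s)/(1-t)))^α :=
              Real.rpow_le_rpow (by positivity) h2n hαpos.le
          _ = 2^α * ((1-s)/(1-t))^α := Real.mul_rpow (by norm_num) hrat_nonneg
          _ = C' * ((1-s)/(1-t))^α := by rw [← hC'eq]
    have htail_nonneg : 0 ≤ tailW ω t := (hpos t ⟨by linarith, ht⟩).le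
    calc tailW ω s ≤ C'^n * tailW ω (1-(1-s)/2^n) := h1
      _ ≤ C'^n * tailW ω t := mul_le_mul_of_nonneg_left h2 (by positivity)
      _ ≤ (C' * ((1-s)/(1-t))^α) * tailW ω t :=
          mul_le_mul_of_nonneg_right hCn htail_nonneg
      _ = C' * ((1-s)/(1-t))^α * tailW ω t := by ring
  · rintro ⟨C, hC1, α, hα, h⟩
    refine ⟨C * 2^α, by positivity, ?_⟩
    intro r hr
    have ht : (1+r)/2 < 1 := by linarith [hr.2]
    have hle := h r ((1+r)/2) hr.1 (by linarith [hr.2]) ht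
    have hne : (1:ℝ) - r ≠ 0 := by intro h0; linarith [hr.2]
    have heq : (1-r)/(1-(1+r)/2) = 2 := by
      rw [show (1:ℝ)-(1+r)/2 = (1-r)/2 by ring]
      field_simp
    rw [heq] at hle
    exact hle
end

section
/- Let ω be a radial weight in D̂. Then there exist C > 0 and λ > 0 such that ∫_0^r ((1-r)/(1-s))^λ ω(s) ds ≤ C ω̂(r) for all 0 ≤ r < 1. -/
open Real MeasureTheory

/-- if `ω ∈ D̂` then there exist `C > 0` and `λ > 0` such that
`∫_0^r ((1-r)/(1-s))^λ ω(s) ds ≤ C ω̂(r)` for all `0 ≤ r < 1`. -/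
theorem statement9 (ω : ℝ → ℝ) (hω0 : ∀ r ∈ Set.Icc (0:ℝ) 1, 0 ≤ ω r)
    (hInt : IntegrableOn ω (Set.Ico (0:ℝ) 1))
    (hpos : ∀ r ∈ Set.Ico (0:ℝ) 1, 0 < tailW ω r)
    (hhat : ∃ C : ℝ, 0 < C ∧ ∀ r ∈ Set.Ico (0:ℝ) 1, tailW ω r ≤ C * tailW ω ((1+r)/2)) :
    ∃ C lam : ℝ, 0 < C ∧ 0 < lam ∧ ∀ r : ℝ, 0 ≤ r → r < 1 →
      (∫ s in (0:ℝ)..r, ((1-r)/(1-s)) ^ lam * ω s) ≤ C * tailW ω r := by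
  classical
  obtain ⟨C0, hC0, hd0⟩ := hhat
  set C : ℝ := max C0 1 with hCdef
  have hC1 : (1:ℝ) ≤ C := le_max_right _ _
  have hCpos : (0:ℝ) < C := lt_of_lt_of_le one_pos hC1
  -- integrability on Icc 0 1
  have hInt1 : IntegrableOn ω (Set.Icc (0:ℝ) 1) := by
    rw [← Set.Ico_union_right (by norm_num : (0:ℝ) ≤ 1)]
    refine hInt.union ?_
    have h0 : volume ({(1:ℝ)} : Set ℝ) = 0 := measure_singleton _
    unfold IntegrableOn
    rw [Measure.restrict_eq_zero.mpr h0]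
    exact integrable_zero_measure
  have hII : ∀ a b : ℝ, 0 ≤ a → a ≤ b → b ≤ 1 → IntervalIntegrable ω volume a b := by
    intro a b ha hab hb
    have hsub : Set.uIcc a b ⊆ Set.Icc (0:ℝ) 1 := by
      rw [Set.uIcc_of_le hab]
      exact Set.Icc_subset_Icc ha hb
    exact (hInt1.mono_set hsub).intervalIntegrable
  -- nonnegativity of tailW
  have htail0 : ∀ t : ℝ, 0 ≤ t → t ≤ 1 → 0 ≤ tailW ω t := by
    intro t ht ht1
    exact intervalIntegral.integral_nonneg ht1
      (fun u hu => hω0 u ⟨le_trans ht hu.1, hu.2⟩)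
  -- splitting
  have hsplit : ∀ a b : ℝ, 0 ≤ a → a ≤ b → b ≤ 1 →
      (∫ s in a..b, ω s) = tailW ω a - tailW ω b := by
    intro a b ha hab hb1
    have := intervalIntegral.integral_add_adjacent_intervals
      (hII a b ha hab hb1) (hII b 1 (le_trans ha hab) hb1 le_rfl)
    unfold tailW
    linarith [this]
  -- monotonicity
  have hmono : ∀ a b : ℝ, 0 ≤ a → a ≤ b → b ≤ 1 → tailW ω b ≤ tailW ω a := by
    intro a b ha hab hb1
    have hnn : 0 ≤ ∫ s in a..b, ω s :=
      intervalIntegral.integral_nonneg hab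
        (fun u hu => hω0 u ⟨le_trans ha hu.1, le_trans hu.2 hb1⟩)
    rw [hsplit a b ha hab hb1] at hnn
    linarith
  -- doubling with C
  have hd : ∀ t : ℝ, 0 ≤ t → t < 1 → tailW ω t ≤ C * tailW ω ((1+t)/2) := by
    intro t ht ht1
    have hmem : (1+t)/2 ∈ Set.Icc (0:ℝ) 1 := by constructor <;> nlinarith
    have h2 : 0 ≤ tailW ω ((1+t)/2) := htail0 _ hmem.1 hmem.2
    calc tailW ω t ≤ C0 * tailW ω ((1+t)/2) := hd0 t ⟨ht, ht1⟩
      _ ≤ C * tailW ω ((1+t)/2) := by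
          exact mul_le_mul_of_nonneg_right (le_max_left _ _) h2
  -- chain lemma
  have hchain : ∀ n : ℕ, ∀ t r : ℝ, 0 ≤ t → t ≤ r → r < 1 → 1 - t ≤ 2^n * (1-r) →
      tailW ω t ≤ C^n * tailW ω r := by
    intro n
    induction n with
    | zero =>
        intro t r ht htr hr1 hle
        have : t = r := le_antisymm htr (by nlinarith)
        simp [this]
    | succ n ih =>
        intro t r ht htr hr1 hle
        have ht1 : t < 1 := lt_of_le_of_lt htr hr1
        have hstep : tailW ω t ≤ C * tailW ω ((1+t)/2) := hd t ht ht1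
        have hmid : tailW ω ((1+t)/2) ≤ C^n * tailW ω r := by
          by_cases hc : (1+t)/2 ≤ r
          · exact ih ((1+t)/2) r (by linarith) hc hr1 (by
              have : (2:ℝ)^(n+1) = 2 * 2^n := by ring
              nlinarith [this])
          · push_neg at hc
            have h1 : tailW ω ((1+t)/2) ≤ tailW ω r :=
              hmono r ((1+t)/2) (by linarith) (le_of_lt hc) (by linarith)
            have h2 : 0 ≤ tailW ω r := htail0 r (by linarith) (le_of_lt hr1)
            calc tailW ω ((1+t)/2) ≤ tailW ω r := h1
              _ = 1 * tailW ω r := (one_mul _).symm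
              _ ≤ C^n * tailW ω r := by
                  exact mul_le_mul_of_nonneg_right (one_le_pow₀ hC1) h2
        calc tailW ω t ≤ C * tailW ω ((1+t)/2) := hstep
          _ ≤ C * (C^n * tailW ω r) := by
              exact mul_le_mul_of_nonneg_left hmid (le_of_lt hCpos)
          _ = C^(n+1) * tailW ω r := by ring
  -- choose lam
  set lam : ℝ := Real.logb 2 C + 1 with hlamdef
  have hlam : 0 < lam := by
    have : 0 ≤ Real.logb 2 C := Real.logb_nonneg one_lt_two hC1
    linarith
  have h2lam : (2:ℝ) ^ lam = 2 * C := by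
    rw [hlamdef, Real.rpow_add (by norm_num), Real.rpow_one,
      Real.rpow_logb (by norm_num) (by norm_num) hCpos]
    ring
  have hhalflam : ((1:ℝ)/2) ^ lam = 1 / (2*C) := by
    rw [Real.div_rpow (by norm_num) (by norm_num), Real.one_rpow, h2lam]
  refine ⟨2*C, lam, by positivity, hlam, ?_⟩
  intro r hr0 hr1
  have h1r : (0:ℝ) < 1 - r := by linarith
  obtain ⟨N, hN⟩ := pow_unbounded_of_one_lt (1/(1-r)) (one_lt_two (α := ℝ))
  have hN' : (1:ℝ) < 2^N * (1-r) := by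
    rw [div_lt_iff₀ h1r] at hN; linarith [hN]
  -- annulus points
  set t : ℕ → ℝ := fun k => max 0 (1 - 2^k * (1-r)) with htdef
  have ht0 : t 0 = r := by simp [htdef]; linarith
  have htN : t N = 0 := by
    simp only [htdef]
    rw [max_eq_left]; linarith
  have htnn : ∀ k, 0 ≤ t k := fun k => le_max_left _ _
  have htler : ∀ k, t k ≤ r := by
    intro k
    have h2k : (1:ℝ) ≤ 2^k := one_le_pow₀ (by norm_num : (1:ℝ) ≤ 2)
    apply max_le hr0
    nlinarith
  have htanti : ∀ k, t (k+1) ≤ t k := by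
    intro k
    apply max_le_max le_rfl
    have : (2:ℝ)^k ≤ 2^(k+1) := by
      apply pow_le_pow_right₀ (by norm_num) (by omega)
    nlinarith
  -- the integrand
  set f : ℝ → ℝ := fun s => ((1-r)/(1-s)) ^ lam * ω s with hfdef
  -- integrability of f on subintervals of [0, r]
  have hfint : ∀ a b : ℝ, 0 ≤ a → a ≤ b → b ≤ r → IntervalIntegrable f volume a b := by
    intro a b ha hab hbr
    have hcont : ContinuousOn (fun s : ℝ => ((1-r)/(1-s)) ^ lam) (Set.Icc 0 r) := by
      apply ContinuousOn.rpow_const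
      · apply ContinuousOn.div continuousOn_const (by fun_prop)
        intro x hx
        have hxr : x ≤ r := hx.2
        intro h; rw [sub_eq_zero] at h; linarith
      · intro x hx
        left
        have h1x : 0 < 1 - x := by linarith [hx.2]
        exact ne_of_gt (div_pos h1r h1x)
    have hIo : IntegrableOn ω (Set.Icc (0:ℝ) r) :=
      hInt1.mono_set (Set.Icc_subset_Icc le_rfl (le_of_lt hr1))
    have hf1 : IntegrableOn f (Set.Icc (0:ℝ) r) :=
      IntegrableOn.continuousOn_mul hcont hIo isCompact_Icc
    have hsub : Set.uIcc a b ⊆ Set.Icc (0:ℝ) r := by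
      rw [Set.uIcc_of_le hab]
      exact Set.Icc_subset_Icc ha hbr
    exact (hf1.mono_set hsub).intervalIntegrable
  -- annulus estimate
  have hann : ∀ k : ℕ, (∫ s in t (k+1)..t k, f s) ≤ C * (1/2)^k * tailW ω r := by
    intro k
    have htailr : 0 ≤ tailW ω r := htail0 r hr0 (le_of_lt hr1)
    by_cases hk : 1 - 2^k * (1-r) ≤ 0
    · -- degenerate
      have h1 : t k = 0 := by simp only [htdef]; rw [max_eq_left hk]
      have h2 : t (k+1) = 0 := le_antisymm (h1 ▸ htanti k) (htnn _)
      rw [h1, h2]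
      simp only [intervalIntegral.integral_same]
      positivity
    · push_neg at hk
      have htk : t k = 1 - 2^k * (1-r) := max_eq_right (le_of_lt hk)
      -- pointwise bound on [t(k+1), t k]
      have hpt : ∀ s ∈ Set.Icc (t (k+1)) (t k), f s ≤ (1/(2*C))^k * ω s := by
        intro s hs
        have hs0 : 0 ≤ s := le_trans (htnn _) hs.1
        have hsr : s ≤ r := le_trans hs.2 (htler k)
        have hωs : 0 ≤ ω s := hω0 s ⟨hs0, by linarith⟩
        have h1s : 2^k * (1-r) ≤ 1 - s := by
          have := hs.2; rw [htk] at this; linarith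
        have h1s' : (0:ℝ) < 1 - s := lt_of_lt_of_le (by positivity) h1s
        have hbase : (1-r)/(1-s) ≤ (1/2)^k := by
          rw [one_div, inv_pow, ← one_div, div_le_div_iff₀ h1s' (by positivity)]
          nlinarith [h1s]
        have hbnn : 0 ≤ (1-r)/(1-s) := by positivity
        have hrp : ((1-r)/(1-s)) ^ lam ≤ ((1/2:ℝ)^k) ^ lam :=
          Real.rpow_le_rpow hbnn hbase (le_of_lt hlam)
        have hcalc : (((1/2:ℝ))^k : ℝ) ^ lam = (1/(2*C))^k := by
          rw [← Real.rpow_natCast ((1/2:ℝ)) k, ← Real.rpow_natCast ((1/(2*C))) k,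
            ← Real.rpow_mul (by norm_num), mul_comm (k:ℝ) lam,
            Real.rpow_mul (by norm_num), hhalflam]
        calc f s ≤ ((1/2:ℝ)^k : ℝ) ^ lam * ω s :=
              mul_le_mul_of_nonneg_right hrp hωs
          _ = (1/(2*C))^k * ω s := by rw [hcalc]
      have hab : t (k+1) ≤ t k := htanti k
      have hfi : IntervalIntegrable f volume (t (k+1)) (t k) :=
        hfint _ _ (htnn _) hab (htler k)
      have hgi : IntervalIntegrable (fun s => (1/(2*C))^k * ω s) volume (t (k+1)) (t k) :=
        (hII _ _ (htnn _) hab (le_trans (htler k) (le_of_lt hr1))).const_mul _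
      have hmonoint := intervalIntegral.integral_mono_on hab hfi hgi hpt
      have hint2 : (∫ s in t (k+1)..t k, (1/(2*C))^k * ω s)
          = (1/(2*C))^k * ∫ s in t (k+1)..t k, ω s := by
        exact intervalIntegral.integral_const_mul _ _
      have hωint : (∫ s in t (k+1)..t k, ω s) ≤ tailW ω (t (k+1)) := by
        rw [hsplit _ _ (htnn _) hab (le_trans (htler k) (le_of_lt hr1))]
        have : 0 ≤ tailW ω (t k) := htail0 _ (htnn _) (le_trans (htler k) (le_of_lt hr1))
        linarith
      have hchainuse : tailW ω (t (k+1)) ≤ C^(k+1) * tailW ω r := by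
        apply hchain (k+1) (t (k+1)) r (htnn _) (htler _) hr1
        have : 1 - 2^(k+1) * (1-r) ≤ t (k+1) := le_max_right _ _
        linarith
      have hkey : (1/(2*C))^k * tailW ω (t (k+1)) ≤ C * (1/2)^k * tailW ω r := by
        calc (1/(2*C))^k * tailW ω (t (k+1)) ≤ (1/(2*C))^k * (C^(k+1) * tailW ω r) := by
              apply mul_le_mul_of_nonneg_left hchainuse (by positivity)
          _ = ((1/(2*C)) * C)^k * (C * tailW ω r) := by
              rw [mul_pow]; ring
          _ = C * (1/2)^k * tailW ω r := by
              have : (1/(2*C)) * C = 1/2 := by field_simp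
              rw [this]; ring
      calc (∫ s in t (k+1)..t k, f s) ≤ ∫ s in t (k+1)..t k, (1/(2*C))^k * ω s := hmonoint
        _ = (1/(2*C))^k * ∫ s in t (k+1)..t k, ω s := hint2
        _ ≤ (1/(2*C))^k * tailW ω (t (k+1)) := by
            apply mul_le_mul_of_nonneg_left hωint (by positivity)
        _ ≤ C * (1/2)^k * tailW ω r := hkey
  -- sum the annuli
  have hsum : (∫ s in (0:ℝ)..r, f s) = ∑ k ∈ Finset.range N, ∫ s in t (k+1)..t k, f s := by
    have key : ∑ i ∈ Finset.range N, (∫ s in t (N-i)..t (N-(i+1)), f s)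
        = ∫ s in t N..t 0, f s := by
      have := intervalIntegral.sum_integral_adjacent_intervals (f := f) (μ := volume)
        (a := fun i => t (N - i)) (n := N) (by
          intro i hi
          show IntervalIntegrable f volume (t (N - i)) (t (N - (i+1)))
          rcases le_total (t (N-i)) (t (N-(i+1))) with h | h
          · exact hfint _ _ (htnn _) h (htler _)
          · exact (hfint _ _ (htnn _) h (htler _)).symm)
      simpa using this
    rw [htN, ht0] at key
    rw [← key]
    rw [← Finset.sum_range_reflect (fun k => ∫ s in t (k+1)..t k, f s) N]
    apply Finset.sum_congr rfl
    intro i hi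
    simp only [Finset.mem_range] at hi
    have e1 : N - 1 - i + 1 = N - i := by omega
    have e2 : N - 1 - i = N - (i+1) := by omega
    simp only [e1, e2]
    have e3 : N - (i+1) + 1 = N - i := by omega
    rw [e3]
  rw [hfdef] at hsum
  rw [hsum]
  have htailr : 0 ≤ tailW ω r := htail0 r hr0 (le_of_lt hr1)
  calc (∑ k ∈ Finset.range N, ∫ s in t (k+1)..t k, f s)
      ≤ ∑ k ∈ Finset.range N, C * (1/2)^k * tailW ω r :=
        Finset.sum_le_sum (fun k _ => hann k)
    _ = (C * tailW ω r) * ∑ k ∈ Finset.range N, (1/2:ℝ)^k := by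
        rw [Finset.mul_sum]; apply Finset.sum_congr rfl; intro k _; ring
    _ ≤ (C * tailW ω r) * 2 := by
        apply mul_le_mul_of_nonneg_left (sum_geometric_two_le N) (by positivity)
    _ = 2*C * tailW ω r := by ring
end

section
/- Let 0 < p, q, s, t < ∞. The space of multipliers from ℓ^{p,q} to ℓ^{s,t} equals ℓ^{s(p/s)', t(q/t)'}, with comparable norms: a double-indexed sequence {b_{j,l}} satisfies ‖{a_{j,l} b_{j,l}}‖_{ℓ^{s,t}} ≤ C ‖{a_{j,l}}‖_{ℓ^{p,q}} for all {a_{j,l}} ∈ ℓ^{p,q} if and only if {b_{j,l}} ∈ ℓ^{s(p/s)', t(q/t)'}, and the optimal C is comparable to ‖{b_{j,l}}‖_{ℓ^{s(p/s)', t(q/t)'}}. -/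
open scoped ENNReal NNReal

/-- Mixed norm `ℓ^{P,Q}` (inner exponent `P` over `l`, outer exponent `Q` over `j`),
valued in `ℝ≥0∞`, with the usual convention that exponent `∞` means a supremum. -/
noncomputable def mixedNorm (P Q : ℝ≥0∞) (a : ℕ → ℕ → ℂ) : ℝ≥0∞ :=
  let inner : ℕ → ℝ≥0∞ := fun j =>
    if P = ⊤ then ⨆ l, (‖a j l‖₊ : ℝ≥0∞)
    else (∑' l, (‖a j l‖₊ : ℝ≥0∞) ^ P.toReal) ^ (1/P.toReal)
  if Q = ⊤ then ⨆ j, inner j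
  else (∑' j, (inner j) ^ Q.toReal) ^ (1/Q.toReal)

/-- For `0 < x`, the exponent `x·(y)'` where `(y)' = y/(y-1)` if `y > 1` and `∞` if `y ≤ 1`. -/
noncomputable def mulConj (x y : ℝ) : ℝ≥0∞ :=
  if y ≤ 1 then ⊤ else ENNReal.ofReal (x * (y/(y-1)))

/-!
Write `multNorm s p g` for the multiplier norm of `g` from `ℓ^p` to `ℓ^s`: it is `sup g` when
`p ≤ s` and the `ℓ^e` norm with `1/e = 1/s - 1/p` when `s < p`. Hölder's inequality shows that
this bounds the multiplier, and the equality case of Hölder (`f = (g / ‖g‖_e)^{e/p}`, or a point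
mass at a maximum of `g` when `p ≤ s`) shows it is attained as soon as `g` is finitely supported.
In the mixed setting the upper bound is Hölder in `l` and then in `j`. For the lower bound one
truncates `b` to the boxes `[0, N)²`, combines the one-variable extremizers `F_j` for the rows and
`c` for the row norms into the test sequence `c_j F_{j,l}`, and lets `N → ∞` by monotone
convergence. Both constants are `1`.
-/

namespace Luecking

variable {ι : Type*}

noncomputable def lpNorm (e : ℝ) (f : ι → ℝ≥0∞) : ℝ≥0∞ := (∑' i, f i ^ e) ^ (1 / e)

lemma rpow_lpNorm {e : ℝ} (he : 0 < e) (f : ι → ℝ≥0∞) : lpNorm e f ^ e = ∑' i, f i ^ e := by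
  rw [lpNorm, ← ENNReal.rpow_mul, one_div_mul_cancel he.ne', ENNReal.rpow_one]

lemma le_lpNorm {e : ℝ} (he : 0 < e) (f : ι → ℝ≥0∞) (i : ι) : f i ≤ lpNorm e f := by
  rw [← ENNReal.rpow_le_rpow_iff he, rpow_lpNorm he]
  exact ENNReal.le_tsum i

lemma lpNorm_mono {e : ℝ} (he : 0 ≤ e) {f g : ι → ℝ≥0∞} (h : f ≤ g) :
    lpNorm e f ≤ lpNorm e g := by
  unfold lpNorm
  gcongr with i
  exact h i

lemma lpNorm_const_mul {e : ℝ} (he : 0 < e) (c : ℝ≥0∞) (f : ι → ℝ≥0∞) :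
    lpNorm e (fun i => c * f i) = c * lpNorm e f := by
  simp only [lpNorm, ENNReal.mul_rpow_of_nonneg _ _ he.le, ENNReal.tsum_mul_left]
  rw [ENNReal.mul_rpow_of_nonneg _ _ (by positivity), ← ENNReal.rpow_mul,
    mul_one_div_cancel he.ne', ENNReal.rpow_one]

lemma lpNorm_zero {e : ℝ} (he : 0 < e) : lpNorm e (0 : ι → ℝ≥0∞) = 0 := by
  simp [lpNorm, he]

lemma lpNorm_eq_zero_iff {e : ℝ} (he : 0 < e) {f : ι → ℝ≥0∞} : lpNorm e f = 0 ↔ f = 0 := by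
  simp [lpNorm, ENNReal.rpow_eq_zero_iff, he, not_lt.2 he.le, funext_iff]

lemma lpNorm_single [DecidableEq ι] {e : ℝ} (he : 0 < e) (i : ι) (x : ℝ≥0∞) :
    lpNorm e (Pi.single i x) = x := by
  rw [lpNorm, tsum_eq_single i fun j hj => by simp [hj, he], Pi.single_eq_same,
    ← ENNReal.rpow_mul, mul_one_div_cancel he.ne', ENNReal.rpow_one]

lemma lpNorm_rpow {s r : ℝ} (hs : 0 < s) (hr : 0 < r) (f : ι → ℝ≥0∞) :
    lpNorm r (fun i => f i ^ s) = lpNorm (s * r) f ^ s := by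
  simp only [lpNorm, ← ENNReal.rpow_mul]
  congr 1
  field_simp

lemma lpNorm_ne_top_of_support_subset {e : ℝ} (he : 0 < e) {g : ι → ℝ≥0∞} (T : Finset ι)
    (hT : ∀ i ∉ T, g i = 0) (hg : ∀ i, g i ≠ ⊤) : lpNorm e g ≠ ⊤ := by
  rw [lpNorm, tsum_eq_sum (s := T) fun i hi => by simp [hT i hi, he]]
  exact ENNReal.rpow_ne_top_of_nonneg (by positivity)
    (ENNReal.sum_ne_top.2 fun i _ => ENNReal.rpow_ne_top_of_nonneg he.le (hg i))

lemma lpNorm_le_of_le_exponent {a c : ℝ} (ha : 0 < a) (hac : a ≤ c) (f : ι → ℝ≥0∞) :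
    lpNorm c f ≤ lpNorm a f := by
  have hc : 0 < c := ha.trans_le hac
  set A := lpNorm a f
  have hterm : ∀ i, f i ^ c ≤ f i ^ a * A ^ (c - a) := fun i => by
    rw [← add_sub_cancel a c, ENNReal.rpow_add_of_nonneg _ _ ha.le (sub_nonneg.2 hac),
      add_sub_cancel_left]
    gcongr
    exact le_lpNorm ha f i
  rw [← ENNReal.rpow_le_rpow_iff hc, rpow_lpNorm hc]
  calc ∑' i, f i ^ c ≤ ∑' i, f i ^ a * A ^ (c - a) := ENNReal.tsum_le_tsum hterm
    _ = A ^ a * A ^ (c - a) := by rw [ENNReal.tsum_mul_right, rpow_lpNorm ha]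
    _ = A ^ c := by
      rw [← ENNReal.rpow_add_of_nonneg _ _ ha.le (sub_nonneg.2 hac), add_sub_cancel]

lemma _root_.ENNReal.tsum_mul_le_Lp_mul_Lq {r r' : ℝ} (hr : r.HolderConjugate r')
    (f g : ι → ℝ≥0∞) :
    ∑' i, f i * g i ≤ (∑' i, f i ^ r) ^ (1 / r) * (∑' i, g i ^ r') ^ (1 / r') := by
  rw [ENNReal.tsum_eq_iSup_sum]
  refine iSup_le fun S => (ENNReal.inner_le_Lp_mul_Lq S f g hr).trans ?_
  gcongr
  · exact hr.one_div_nonneg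
  · exact ENNReal.sum_le_tsum S
  · exact hr.symm.one_div_nonneg
  · exact ENNReal.sum_le_tsum S

lemma lpNorm_mul_le {s p e : ℝ} (hs : 0 < s) (hp : 0 < p) (he : 0 < e)
    (hspe : 1 / p + 1 / e = 1 / s) (f g : ι → ℝ≥0∞) :
    lpNorm s (fun i => f i * g i) ≤ lpNorm p f * lpNorm e g := by
  have hconj : (p / s).HolderConjugate (e / s) := by
    rw [Real.holderConjugate_iff]
    constructor
    · rw [one_lt_div hs]
      have : 1 / p < 1 / s := by linarith [one_div_pos.2 he]
      exact (one_div_lt_one_div hp hs).1 this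
    · field_simp
      field_simp at hspe
      linarith
  rw [← ENNReal.rpow_le_rpow_iff hs, rpow_lpNorm hs, ENNReal.mul_rpow_of_nonneg _ _ hs.le]
  calc ∑' i, (f i * g i) ^ s = ∑' i, f i ^ s * g i ^ s := by
        simp only [ENNReal.mul_rpow_of_nonneg _ _ hs.le]
    _ ≤ lpNorm (p / s) (fun i => f i ^ s) * lpNorm (e / s) (fun i => g i ^ s) :=
        ENNReal.tsum_mul_le_Lp_mul_Lq hconj _ _
    _ = lpNorm p f ^ s * lpNorm e g ^ s := by
        rw [lpNorm_rpow hs (by positivity), lpNorm_rpow hs (by positivity),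
          mul_div_cancel₀ _ hs.ne', mul_div_cancel₀ _ hs.ne']

lemma _root_.ENNReal.iSup_rpow {κ : Sort*} {c : ℝ} (hc : 0 < c) (u : κ → ℝ≥0∞) :
    (⨆ n, u n) ^ c = ⨆ n, u n ^ c :=
  (ENNReal.orderIsoRpow c hc).map_iSup u

lemma _root_.ENNReal.tsum_iSup_of_monotone {u : ℕ → ι → ℝ≥0∞} (hu : Monotone u) :
    ∑' i, ⨆ n, u n i = ⨆ n, ∑' i, u n i := by
  simp only [ENNReal.tsum_eq_iSup_sum]
  rw [iSup_comm]
  exact iSup_congr fun S => ENNReal.finsetSum_iSup_of_monotone fun i _ _ hmn => hu hmn i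

lemma lpNorm_iSup_of_monotone {e : ℝ} (he : 0 < e) {u : ℕ → ι → ℝ≥0∞} (hu : Monotone u) :
    lpNorm e (fun i => ⨆ n, u n i) = ⨆ n, lpNorm e (u n) := by
  simp only [lpNorm, ENNReal.iSup_rpow he]
  rw [ENNReal.tsum_iSup_of_monotone fun m n hmn i => ENNReal.rpow_le_rpow (hu hmn i) he.le,
    ENNReal.iSup_rpow (by positivity)]

/-- `s * p / (p - s)` is the exponent `s (p/s)'` of the paper. -/
noncomputable def multNorm (s p : ℝ) (g : ι → ℝ≥0∞) : ℝ≥0∞ :=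
  if p ≤ s then ⨆ i, g i else lpNorm (s * p / (p - s)) g

lemma multNorm_exponent_pos {s p : ℝ} (hs : 0 < s) (hsp : s < p) : 0 < s * p / (p - s) := by
  have := sub_pos.2 hsp
  have := hs.trans hsp
  positivity

lemma multNorm_zero {s p : ℝ} (hs : 0 < s) : multNorm s p (0 : ι → ℝ≥0∞) = 0 := by
  unfold multNorm
  split_ifs with hps
  · simp
  · exact lpNorm_zero (multNorm_exponent_pos hs (not_le.1 hps))

lemma multNorm_mono {s p : ℝ} (hs : 0 < s) {f g : ι → ℝ≥0∞} (h : f ≤ g) :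
    multNorm s p f ≤ multNorm s p g := by
  unfold multNorm
  split_ifs with hps
  · exact iSup_mono h
  · exact lpNorm_mono (multNorm_exponent_pos hs (not_le.1 hps)).le h

lemma multNorm_ne_top_of_support_subset {s p : ℝ} (hs : 0 < s) {g : ι → ℝ≥0∞} (T : Finset ι)
    (hT : ∀ i ∉ T, g i = 0) (hg : ∀ i, g i ≠ ⊤) : multNorm s p g ≠ ⊤ := by
  unfold multNorm
  split_ifs with hps
  · refine ne_top_of_le_ne_top (ENNReal.sum_ne_top (s := T).2 fun i _ => hg i)
      (iSup_le fun i => ?_)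
    by_cases hi : i ∈ T
    · exact Finset.single_le_sum (fun j _ => zero_le) hi
    · simp [hT i hi]
  · exact lpNorm_ne_top_of_support_subset (multNorm_exponent_pos hs (not_le.1 hps)) T hT hg

lemma multNorm_iSup_of_monotone {s p : ℝ} (hs : 0 < s) {u : ℕ → ι → ℝ≥0∞} (hu : Monotone u) :
    multNorm s p (fun i => ⨆ n, u n i) = ⨆ n, multNorm s p (u n) := by
  unfold multNorm
  split_ifs with hps
  · exact iSup_comm
  · exact lpNorm_iSup_of_monotone (multNorm_exponent_pos hs (not_le.1 hps)) hu

lemma lpNorm_mul_le_multNorm_mul {s p : ℝ} (hs : 0 < s) (hp : 0 < p) (f g : ι → ℝ≥0∞) :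
    lpNorm s (fun i => f i * g i) ≤ multNorm s p g * lpNorm p f := by
  unfold multNorm
  split_ifs with hps
  · calc lpNorm s (fun i => f i * g i) ≤ lpNorm s (fun i => (⨆ j, g j) * f i) :=
          lpNorm_mono hs.le fun i => by rw [mul_comm]; gcongr; exact le_iSup g i
      _ = (⨆ j, g j) * lpNorm s f := lpNorm_const_mul hs _ _
      _ ≤ (⨆ j, g j) * lpNorm p f := by gcongr; exact lpNorm_le_of_le_exponent hp hps f
  · have hsp := not_le.1 hps
    rw [mul_comm]
    refine lpNorm_mul_le hs hp (multNorm_exponent_pos hs hsp) ?_ f g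
    have := sub_pos.2 hsp
    field_simp
    ring

lemma exists_lpNorm_le_one_iSup_le_of_isMax {s p : ℝ} (hs : 0 < s) (hp : 0 < p)
    {g : ι → ℝ≥0∞} {i₀ : ι} (hi₀ : ∀ i, g i ≤ g i₀) :
    ∃ f : ι → ℝ≥0∞, (∀ i, f i ≠ ⊤) ∧ lpNorm p f ≤ 1 ∧
      ⨆ i, g i ≤ lpNorm s (fun i => f i * g i) := by
  classical
  refine ⟨(Pi.single i₀ 1 : ι → ℝ≥0∞), fun i => ?_, (lpNorm_single hp i₀ 1).le,
    iSup_le fun i => ?_⟩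
  · by_cases h : i = i₀ <;> simp [h]
  · have hfg : (fun i => (Pi.single i₀ 1 : ι → ℝ≥0∞) i * g i) = Pi.single i₀ (g i₀) := by
      funext j
      by_cases h : j = i₀ <;> simp [h]
    rw [hfg, lpNorm_single hs]
    exact hi₀ i

lemma exists_lpNorm_le_one_lpNorm_le {s p : ℝ} (hs : 0 < s) (hsp : s < p) {g : ι → ℝ≥0∞}
    (hg : ∀ i, g i ≠ ⊤) (hg0 : lpNorm (s * p / (p - s)) g ≠ 0)
    (hgtop : lpNorm (s * p / (p - s)) g ≠ ⊤) :
    ∃ f : ι → ℝ≥0∞, (∀ i, f i ≠ ⊤) ∧ lpNorm p f ≤ 1 ∧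
      lpNorm (s * p / (p - s)) g ≤ lpNorm s (fun i => f i * g i) := by
  set e := s * p / (p - s)
  set L := lpNorm e g
  have hd : 0 < p - s := sub_pos.2 hsp
  have hp : 0 < p := hs.trans hsp
  set a := s / (p - s)
  have ha : 0 < a := by positivity
  have hap : a * p = e := by simp only [a, e]; field_simp
  have has : (a + 1) * s = e := by simp only [a, e]; field_simp; ring
  refine ⟨fun i => L ^ (-a) * g i ^ a, fun i => ?_, le_of_eq ?_, le_of_eq ?_⟩
  · exact ENNReal.mul_ne_top (ENNReal.rpow_ne_top_of_ne_zero hg0 hgtop)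
      (ENNReal.rpow_ne_top_of_nonneg ha.le (hg i))
  · rw [lpNorm_const_mul hp, lpNorm_rpow ha hp, hap, ← ENNReal.rpow_add _ _ hg0 hgtop,
      neg_add_cancel, ENNReal.rpow_zero]
  · have hfg : (fun i => L ^ (-a) * g i ^ a * g i) = fun i => L ^ (-a) * g i ^ (a + 1) := by
      funext i
      rw [mul_assoc, ENNReal.rpow_add_of_nonneg _ _ ha.le zero_le_one, ENNReal.rpow_one]
    rw [hfg, lpNorm_const_mul hs, lpNorm_rpow (by positivity) hs, has,
      ← ENNReal.rpow_add _ _ hg0 hgtop, neg_add_cancel_left, ENNReal.rpow_one]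

lemma exists_lpNorm_le_one_multNorm_le {s p : ℝ} (hs : 0 < s) (hp : 0 < p) {g : ι → ℝ≥0∞}
    (T : Finset ι) (hT : ∀ i ∉ T, g i = 0) (hg : ∀ i, g i ≠ ⊤) :
    ∃ f : ι → ℝ≥0∞, (∀ i, f i ≠ ⊤) ∧ lpNorm p f ≤ 1 ∧
      multNorm s p g ≤ lpNorm s (fun i => f i * g i) := by
  by_cases hg0 : g = 0
  · exact ⟨0, by simp, by simp [lpNorm_zero hp], by simp [hg0, multNorm_zero hs]⟩
  unfold multNorm
  split_ifs with hps
  · obtain ⟨i, hi⟩ : ∃ i, g i ≠ 0 := by simpa [funext_iff] using hg0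
    obtain ⟨i₀, -, hi₀⟩ := T.exists_max_image g ⟨i, by_contra fun h => hi (hT i h)⟩
    refine exists_lpNorm_le_one_iSup_le_of_isMax (i₀ := i₀) hs hp fun j => ?_
    by_cases hj : j ∈ T
    · exact hi₀ j hj
    · simp [hT j hj]
  · have hsp := not_le.1 hps
    have he := multNorm_exponent_pos hs hsp
    exact exists_lpNorm_le_one_lpNorm_le hs hsp hg ((lpNorm_eq_zero_iff he).not.2 hg0)
      (lpNorm_ne_top_of_support_subset he T hT hg)

section Mixed

variable {κ : Type*} {s p t q : ℝ}

lemma lpNorm_lpNorm_mul_le (hs : 0 < s) (hp : 0 < p) (ht : 0 < t) (hq : 0 < q)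
    (f g : κ → ι → ℝ≥0∞) :
    lpNorm t (fun j => lpNorm s (fun i => f j i * g j i)) ≤
      multNorm t q (fun j => multNorm s p (g j)) * lpNorm q (fun j => lpNorm p (f j)) :=
  calc _ ≤ lpNorm t (fun j => lpNorm p (f j) * multNorm s p (g j)) :=
        lpNorm_mono ht.le fun j => by rw [mul_comm]; exact lpNorm_mul_le_multNorm_mul hs hp _ _
    _ ≤ _ := lpNorm_mul_le_multNorm_mul ht hq _ _

lemma exists_mixed_lpNorm_le_one_multNorm_le (hs : 0 < s) (hp : 0 < p) (ht : 0 < t)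
    (hq : 0 < q) {g : κ → ι → ℝ≥0∞} (S : Finset κ) (T : Finset ι) (hS : ∀ j ∉ S, g j = 0)
    (hT : ∀ j, ∀ i ∉ T, g j i = 0) (hg : ∀ j i, g j i ≠ ⊤) :
    ∃ f : κ → ι → ℝ≥0∞, (∀ j i, f j i ≠ ⊤) ∧ lpNorm q (fun j => lpNorm p (f j)) ≤ 1 ∧
      multNorm t q (fun j => multNorm s p (g j)) ≤
        lpNorm t (fun j => lpNorm s (fun i => f j i * g j i)) := by
  choose F hFtop hF1 hFg using fun j => exists_lpNorm_le_one_multNorm_le hs hp T (hT j) (hg j)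
  obtain ⟨c, hctop, hc1, hcM⟩ := exists_lpNorm_le_one_multNorm_le ht hq S
    (fun j hj => by simp [hS j hj, multNorm_zero hs]) fun j =>
      multNorm_ne_top_of_support_subset hs T (hT j) (hg j)
  refine ⟨fun j i => c j * F j i, fun j i => ENNReal.mul_ne_top (hctop j) (hFtop j i), ?_, ?_⟩
  · calc lpNorm q (fun j => lpNorm p (fun i => c j * F j i))
        = lpNorm q (fun j => c j * lpNorm p (F j)) := by simp only [lpNorm_const_mul hp]
      _ ≤ lpNorm q c := lpNorm_mono hq.le fun j => mul_le_of_le_one_right' (hF1 j)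
      _ ≤ 1 := hc1
  · calc multNorm t q (fun j => multNorm s p (g j))
        ≤ lpNorm t (fun j => c j * multNorm s p (g j)) := hcM
      _ ≤ lpNorm t (fun j => c j * lpNorm s (fun i => F j i * g j i)) :=
        lpNorm_mono ht.le fun j => by gcongr; exact hFg j
      _ = lpNorm t (fun j => lpNorm s (fun i => c j * F j i * g j i)) := by
        simp only [mul_assoc, lpNorm_const_mul hs]

end Mixed

def boxTrunc (N : ℕ) (g : ℕ → ℕ → ℝ≥0∞) (j i : ℕ) : ℝ≥0∞ :=
  if j < N ∧ i < N then g j i else 0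

lemma boxTrunc_le (N : ℕ) (g : ℕ → ℕ → ℝ≥0∞) (j i : ℕ) : boxTrunc N g j i ≤ g j i := by
  unfold boxTrunc
  split_ifs <;> simp

lemma monotone_boxTrunc (g : ℕ → ℕ → ℝ≥0∞) : Monotone fun N => boxTrunc N g := by
  intro M N hMN j i
  simp only [boxTrunc]
  split_ifs <;> first | rfl | exact zero_le | omega

lemma iSup_boxTrunc (g : ℕ → ℕ → ℝ≥0∞) (j i : ℕ) : ⨆ N, boxTrunc N g j i = g j i :=
  le_antisymm (iSup_le fun N => boxTrunc_le N g j i)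
    (le_iSup_of_le (max j i + 1) (by rw [boxTrunc, if_pos (by omega)]))

lemma multNorm_multNorm_eq_iSup_boxTrunc {s p t q : ℝ} (hs : 0 < s) (ht : 0 < t)
    (g : ℕ → ℕ → ℝ≥0∞) :
    multNorm t q (fun j => multNorm s p (g j)) =
      ⨆ N, multNorm t q (fun j => multNorm s p (boxTrunc N g j)) := by
  have hmono := monotone_boxTrunc g
  conv_lhs => rw [show g = fun j i => ⨆ N, boxTrunc N g j i from
    funext₂ fun j i => (iSup_boxTrunc g j i).symm]
  simp only [multNorm_iSup_of_monotone hs fun M N hMN => hmono hMN _]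
  exact multNorm_iSup_of_monotone ht fun M N hMN j => multNorm_mono hs (hmono hMN j)

lemma multNorm_multNorm_le_of_forall {s p t q : ℝ} (hs : 0 < s) (hp : 0 < p) (ht : 0 < t)
    (hq : 0 < q) {g : ℕ → ℕ → ℝ≥0∞} (hg : ∀ j i, g j i ≠ ⊤) {C : ℝ≥0∞}
    (H : ∀ f : ℕ → ℕ → ℝ≥0∞, (∀ j i, f j i ≠ ⊤) →
      lpNorm t (fun j => lpNorm s (fun i => f j i * g j i)) ≤
        C * lpNorm q (fun j => lpNorm p (f j))) :
    multNorm t q (fun j => multNorm s p (g j)) ≤ C := by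
  rw [multNorm_multNorm_eq_iSup_boxTrunc hs ht]
  refine iSup_le fun N => ?_
  obtain ⟨f, hftop, hf1, hfM⟩ := exists_mixed_lpNorm_le_one_multNorm_le (g := boxTrunc N g)
    hs hp ht hq (Finset.range N) (Finset.range N)
    (fun j hj => funext fun i => if_neg fun h => hj (Finset.mem_range.2 h.1))
    (fun j i hi => if_neg fun h => hi (Finset.mem_range.2 h.2))
    fun j i => ne_top_of_le_ne_top (hg j i) (boxTrunc_le N g j i)
  calc multNorm t q (fun j => multNorm s p (boxTrunc N g j))
      ≤ lpNorm t (fun j => lpNorm s (fun i => f j i * boxTrunc N g j i)) := hfM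
    _ ≤ lpNorm t (fun j => lpNorm s (fun i => f j i * g j i)) :=
      lpNorm_mono ht.le fun j => lpNorm_mono hs.le fun i => by
        gcongr
        exact boxTrunc_le N g j i
    _ ≤ C * lpNorm q (fun j => lpNorm p (f j)) := H f hftop
    _ ≤ C := mul_le_of_le_one_right' hf1

noncomputable def seqNorm (P : ℝ≥0∞) (f : ι → ℝ≥0∞) : ℝ≥0∞ :=
  if P = ⊤ then ⨆ i, f i else lpNorm P.toReal f

lemma mixedNorm_eq_seqNorm (P Q : ℝ≥0∞) (a : ℕ → ℕ → ℂ) :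
    mixedNorm P Q a = seqNorm Q (fun j => seqNorm P (fun l => ‖a j l‖ₑ)) := rfl

lemma seqNorm_ofReal {e : ℝ} (he : 0 ≤ e) : seqNorm (ι := ι) (ENNReal.ofReal e) = lpNorm e := by
  funext f
  simp [seqNorm, he]

lemma seqNorm_mulConj {s p : ℝ} (hs : 0 < s) :
    seqNorm (ι := ι) (mulConj s (p / s)) = multNorm s p := by
  funext f
  unfold seqNorm mulConj multNorm
  by_cases hps : p ≤ s
  · simp [(div_le_one hs).2 hps, hps]
  · have hsp := not_le.1 hps
    have h1 : ¬ p / s ≤ 1 := by rwa [div_le_one hs]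
    have he' : s * (p / s / (p / s - 1)) = s * p / (p - s) := by
      have := sub_pos.2 hsp
      field_simp
    simp [h1, hps, he', (multNorm_exponent_pos hs hsp).le]

lemma enorm_ofReal_toReal {x : ℝ≥0∞} (hx : x ≠ ⊤) : ‖((x.toReal : ℝ) : ℂ)‖ₑ = x := by
  rw [enorm_eq_nnnorm, Complex.nnnorm_real, ← enorm_eq_nnnorm, Real.enorm_toReal hx]

end Luecking

open Luecking

/-- Luecking's multiplier lemma: for `0 < p,q,s,t < ∞`,
`[ℓ^{p,q}, ℓ^{s,t}] = ℓ^{s(p/s)', t(q/t)'}` with comparable norms. -/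
theorem statement11 (p q s t : ℝ) (hp : 0 < p) (hq : 0 < q) (hs : 0 < s) (ht : 0 < t) :
    ∃ c₁ c₂ : ℝ≥0∞, 0 < c₁ ∧ c₁ ≠ ⊤ ∧ 0 < c₂ ∧ c₂ ≠ ⊤ ∧
      ∀ b : ℕ → ℕ → ℂ,
        (∀ a : ℕ → ℕ → ℂ,
          mixedNorm (ENNReal.ofReal s) (ENNReal.ofReal t) (fun j l => a j l * b j l)
            ≤ c₂ * mixedNorm (mulConj s (p/s)) (mulConj t (q/t)) b
                * mixedNorm (ENNReal.ofReal p) (ENNReal.ofReal q) a) ∧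
        (∀ C : ℝ≥0∞,
          (∀ a : ℕ → ℕ → ℂ,
            mixedNorm (ENNReal.ofReal s) (ENNReal.ofReal t) (fun j l => a j l * b j l)
              ≤ C * mixedNorm (ENNReal.ofReal p) (ENNReal.ofReal q) a) →
          mixedNorm (mulConj s (p/s)) (mulConj t (q/t)) b ≤ c₁ * C) := by
  refine ⟨1, 1, one_pos, ENNReal.one_ne_top, one_pos, ENNReal.one_ne_top,
    fun b => ⟨fun a => ?_, fun C hC => ?_⟩⟩
  · simp only [mixedNorm_eq_seqNorm, seqNorm_ofReal hs.le, seqNorm_ofReal ht.le,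
      seqNorm_ofReal hp.le, seqNorm_ofReal hq.le, seqNorm_mulConj hs, seqNorm_mulConj ht, one_mul,
      enorm_mul]
    exact lpNorm_lpNorm_mul_le hs hp ht hq _ _
  · simp only [mixedNorm_eq_seqNorm, seqNorm_mulConj hs, seqNorm_mulConj ht, one_mul]
    refine multNorm_multNorm_le_of_forall hs hp ht hq (fun j l => enorm_ne_top) fun f hf => ?_
    simpa [mixedNorm_eq_seqNorm, seqNorm_ofReal, hs.le, ht.le, hp.le, hq.le,
      enorm_ofReal_toReal, hf] using hC fun j l => ((f j l).toReal : ℂ)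
end

section
/- Let 0 < q, s < ∞ and C ≥ 1 be given. There exist constants C₁, C₂ > 0 depending only on C, s, q such that for all N, M ∈ ℕ with N ≤ M ≤ C·N, every analytic f on the unit disc and every 0 ≤ r < 1: C₁ ‖{(f_{[s]}(r))_{N,l}}_{l=0}^{N-1}‖_{ℓ^q} ≤ ‖{(f_{[s]}(r))_{M,l}}_{l=0}^{M-1}‖_{ℓ^q} ≤ C₂ ‖{(f_{[s]}(r))_{N,l}}_{l=0}^{N-1}‖_{ℓ^q}. -/
open Real MeasureTheory

noncomputable def cpt (r θ : ℝ) : ℂ := (r : ℂ) * Complex.exp ((θ : ℂ) * Complex.I)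

/-- Block mean `(f_{[s]}(r))_{N,l} = (∫_{I_{N,l}} |f(re^{iθ})|^s dθ/2π)^{1/s}`. -/
noncomputable def blockMean (s r : ℝ) (f : ℂ → ℂ) (N l : ℕ) : ℝ :=
  (∫ θ in (2*π*l/N)..(2*π*(l+1)/N), ‖f (cpt r θ)‖ ^ s / (2*π)) ^ (1/s)

/-!
An arc of either partition is covered, up to endpoints, by the arcs of the other partition
whose interiors it meets. Since `N ≤ M ≤ ⌈C⌉ N`, every arc meets at most `⌈C⌉ + 1` arcs of the
other partition. So each block integral `∫_{I} |f|^s` is bounded by a sum of boundedly many block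
integrals of the other partition, each of which is used boundedly often; raising to the power
`q / s` and double counting compares the two `ℓ^{q/s}` sums.
-/

open Finset

theorem sum_rpow_le_card_rpow_mul_sum {ι : Type*} (T : Finset ι) {A : ι → ℝ}
    (hA : ∀ i ∈ T, 0 ≤ A i) {t : ℝ} (ht : 0 < t) :
    (∑ i ∈ T, A i) ^ t ≤ (#T : ℝ) ^ t * ∑ i ∈ T, A i ^ t := by
  have hsum : 0 ≤ ∑ i ∈ T, A i ^ t := sum_nonneg fun i hi => rpow_nonneg (hA i hi) t
  set m := (∑ i ∈ T, A i ^ t) ^ t⁻¹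
  have hAm : ∀ i ∈ T, A i ≤ m := fun i hi =>
    (le_rpow_inv_iff_of_pos (hA i hi) hsum ht).mpr (single_le_sum (f := fun j => A j ^ t)
      (fun j hj => rpow_nonneg (hA j hj) t) hi)
  calc (∑ i ∈ T, A i) ^ t ≤ (#T * m) ^ t := by
        gcongr
        · exact sum_nonneg hA
        · simpa using sum_le_card_nsmul T A m hAm
    _ = (#T : ℝ) ^ t * ∑ i ∈ T, A i ^ t := by
        rw [mul_rpow (by positivity) (by positivity), rpow_inv_rpow hsum ht.ne']

theorem sum_rpow_le_of_le_sum_cover {ι κ : Type*} [DecidableEq ι] (s : Finset κ) (u : Finset ι)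
    (T : κ → Finset ι) {A : ι → ℝ} {B : κ → ℝ} {t : ℝ} (ht : 0 < t) (K₁ K₂ : ℕ)
    (hA : ∀ i ∈ u, 0 ≤ A i) (hB : ∀ j ∈ s, 0 ≤ B j) (hTu : ∀ j ∈ s, T j ⊆ u)
    (hBT : ∀ j ∈ s, B j ≤ ∑ i ∈ T j, A i) (hT : ∀ j ∈ s, #(T j) ≤ K₁)
    (hfib : ∀ i ∈ u, #{j ∈ s | i ∈ T j} ≤ K₂) :
    ∑ j ∈ s, B j ^ t ≤ (K₁ : ℝ) ^ t * K₂ * ∑ i ∈ u, A i ^ t := by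
  have hAt : ∀ i ∈ u, 0 ≤ A i ^ t := fun i hi => rpow_nonneg (hA i hi) t
  calc ∑ j ∈ s, B j ^ t ≤ ∑ j ∈ s, (K₁ : ℝ) ^ t * ∑ i ∈ T j, A i ^ t := by
        refine sum_le_sum fun j hj => ?_
        have hTA : ∀ i ∈ T j, 0 ≤ A i := fun i hi => hA i (hTu j hj hi)
        calc B j ^ t ≤ (∑ i ∈ T j, A i) ^ t := rpow_le_rpow (hB j hj) (hBT j hj) ht.le
          _ ≤ (#(T j) : ℝ) ^ t * ∑ i ∈ T j, A i ^ t := sum_rpow_le_card_rpow_mul_sum _ hTA ht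
          _ ≤ (K₁ : ℝ) ^ t * ∑ i ∈ T j, A i ^ t := by
            gcongr
            · exact sum_nonneg fun i hi => rpow_nonneg (hTA i hi) t
            · exact_mod_cast hT j hj
    _ = (K₁ : ℝ) ^ t * ∑ i ∈ u, ∑ j ∈ s with i ∈ T j, A i ^ t := by
        rw [← mul_sum, sum_comm' (t' := u) (s' := fun i => {j ∈ s | i ∈ T j})]
        intro j i
        simp only [mem_filter]
        exact ⟨fun h => ⟨⟨h.1, h.2⟩, hTu j h.1 h.2⟩, fun h => h.1⟩
    _ ≤ (K₁ : ℝ) ^ t * ∑ i ∈ u, (K₂ : ℝ) * A i ^ t := by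
        gcongr with i hi
        rw [sum_const, nsmul_eq_mul]
        gcongr
        · exact hAt i hi
        · exact_mod_cast hfib i hi
    _ = (K₁ : ℝ) ^ t * K₂ * ∑ i ∈ u, A i ^ t := by rw [← mul_sum, mul_assoc]

/-- The indices `i < K` for which the open arcs `(2πi/K, 2π(i+1)/K)` and
`(2πj/L, 2π(j+1)/L)` intersect. -/
def overlappingArcs (K L j : ℕ) : Finset ℕ :=
  {i ∈ range K | i * L < (j + 1) * K ∧ j * K < (i + 1) * L}

theorem mem_overlappingArcs_comm {K L i j : ℕ} (hi : i < K) (hj : j < L) :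
    i ∈ overlappingArcs K L j ↔ j ∈ overlappingArcs L K i := by
  simp only [overlappingArcs, mem_filter, mem_range]
  tauto

theorem overlappingArcs_eq_Ico {K L j : ℕ} (hj : j < L) :
    overlappingArcs K L j = Ico (j * K / L) (((j + 1) * K + L - 1) / L) := by
  have hL : 0 < L := by omega
  ext i
  have hlo : j * K / L ≤ i ↔ j * K < (i + 1) * L := by
    rw [← Nat.lt_succ_iff, Nat.div_lt_iff_lt_mul hL]
  have hhi : i < ((j + 1) * K + L - 1) / L ↔ i * L < (j + 1) * K := by
    rw [← Nat.succ_le_iff, Nat.le_div_iff_mul_le hL, Nat.succ_mul]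
    omega
  have hK : i * L < (j + 1) * K → i < K := fun h =>
    Nat.lt_of_mul_lt_mul_right (h.trans_le (by rw [mul_comm K]; exact Nat.mul_le_mul_right K hj))
  simp only [overlappingArcs, mem_filter, mem_range, mem_Ico, hlo, hhi]
  tauto

theorem card_overlappingArcs_le {K L c j : ℕ} (hj : j < L) (hKL : K ≤ c * L) :
    #(overlappingArcs K L j) ≤ c + 1 := by
  have hL : 0 < L := by omega
  rw [overlappingArcs_eq_Ico hj, Nat.card_Ico]
  have hfloor : j * K < (j * K / L + 1) * L := (Nat.div_lt_iff_lt_mul hL).mp (Nat.lt_succ_self _)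
  have hceil : ((j + 1) * K + L - 1) / L ≤ j * K / L + 1 + c := by
    have : (j + 1) * K < L * (j * K / L + 1 + c) := by nlinarith
    rw [Nat.div_le_iff_le_mul_add_pred hL]
    omega
  omega

noncomputable def arcEndpoint (K i : ℕ) : ℝ := 2 * π * i / K

theorem arcEndpoint_le_arcEndpoint {K L u v : ℕ} (hK : 0 < K) (hL : 0 < L)
    (h : u * L ≤ v * K) : arcEndpoint K u ≤ arcEndpoint L v := by
  have h' : (u : ℝ) * L ≤ v * K := by exact_mod_cast h
  unfold arcEndpoint
  rw [div_le_div_iff₀ (by positivity) (by positivity)]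
  nlinarith [pi_pos]

theorem arcEndpoint_le_succ (K i : ℕ) : arcEndpoint K i ≤ arcEndpoint K (i + 1) := by
  unfold arcEndpoint
  gcongr
  simp

noncomputable def arcIntegral (g : ℝ → ℝ) (K i : ℕ) : ℝ :=
  ∫ θ in arcEndpoint K i..arcEndpoint K (i + 1), g θ

section

variable {g : ℝ → ℝ}

theorem arcIntegral_nonneg (hg₀ : 0 ≤ g) (K i : ℕ) : 0 ≤ arcIntegral g K i :=
  intervalIntegral.integral_nonneg (arcEndpoint_le_succ K i) fun θ _ => hg₀ θ

theorem arcIntegral_le_sum_overlappingArcs (hg₀ : 0 ≤ g) (hg : LocallyIntegrable g)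
    {K L j : ℕ} (hK : 0 < K) (hj : j < L) :
    arcIntegral g L j ≤ ∑ i ∈ overlappingArcs K L j, arcIntegral g K i := by
  have hL : 0 < L := by omega
  have hint : ∀ a b, IntervalIntegrable g volume a b := fun a b =>
    (hg.integrableOn_isCompact isCompact_uIcc).intervalIntegrable
  set lo := j * K / L
  set hi := ((j + 1) * K + L - 1) / L
  have hlo : lo * L ≤ j * K := Nat.div_mul_le_self _ _
  have hhi : (j + 1) * K ≤ hi * L := by
    have h₁ : (j + 1) * K + L - 1 < (hi + 1) * L := (Nat.div_lt_iff_lt_mul hL).mp (by omega)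
    rw [add_one_mul hi] at h₁
    omega
  have hlohi : lo ≤ hi := Nat.div_le_div_right (by rw [Nat.succ_mul]; omega)
  rw [overlappingArcs_eq_Ico hj]
  unfold arcIntegral
  rw [intervalIntegral.sum_integral_adjacent_intervals_Ico hlohi fun _ _ => hint _ _]
  exact intervalIntegral.integral_mono_interval (arcEndpoint_le_arcEndpoint hK hL hlo)
    (arcEndpoint_le_succ L j) (arcEndpoint_le_arcEndpoint hL hK hhi)
    (Filter.Eventually.of_forall hg₀) (hint _ _)

theorem sum_arcIntegral_rpow_le (hg₀ : 0 ≤ g) (hg : LocallyIntegrable g) {t : ℝ} (ht : 0 < t)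
    {K L a b : ℕ} (hLK : L ≤ a * K) (hKL : K ≤ b * L) :
    ∑ j ∈ range L, arcIntegral g L j ^ t
      ≤ ((b : ℝ) + 1) ^ t * ((a : ℝ) + 1) * ∑ i ∈ range K, arcIntegral g K i ^ t := by
  have h := sum_rpow_le_of_le_sum_cover (range L) (range K) (overlappingArcs K L) ht (b + 1) (a + 1)
    (fun i _ => arcIntegral_nonneg hg₀ K i) (fun j _ => arcIntegral_nonneg hg₀ L j)
    (fun j _ => filter_subset _ _)
    (fun j hj => by
      have hj := mem_range.mp hj
      refine arcIntegral_le_sum_overlappingArcs hg₀ hg (Nat.pos_of_ne_zero ?_) hj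
      rintro rfl
      omega)
    (fun j hj => card_overlappingArcs_le (mem_range.mp hj) hKL)
    (fun i hi => by
      have hi := mem_range.mp hi
      refine (card_le_card fun j hj => ?_).trans (card_overlappingArcs_le hi hLK)
      rw [mem_filter, mem_range] at hj
      exact (mem_overlappingArcs_comm (mem_range.mp (filter_subset _ _ hj.2)) hj.1).mp hj.2)
  exact_mod_cast h

end

theorem norm_cpt {r : ℝ} (hr : 0 ≤ r) (θ : ℝ) : ‖cpt r θ‖ = r := by
  rw [cpt, norm_mul, Complex.norm_exp_ofReal_mul_I, mul_one, Complex.norm_real,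
    Real.norm_of_nonneg hr]

theorem continuous_cpt (r : ℝ) : Continuous (cpt r) := by
  unfold cpt
  fun_prop

theorem blockMean_rpow_eq {s q r : ℝ} {f : ℂ → ℂ} (K l : ℕ) :
    blockMean s r f K l ^ q = arcIntegral (fun θ => ‖f (cpt r θ)‖ ^ s / (2 * π)) K l ^ (q / s) := by
  have h₀ := arcIntegral_nonneg (g := fun θ => ‖f (cpt r θ)‖ ^ s / (2 * π))
    (fun θ => by positivity) K l
  rw [blockMean, ← rpow_mul (by simpa [arcIntegral, arcEndpoint] using h₀)]
  simp [arcIntegral, arcEndpoint, div_eq_inv_mul]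

theorem rpow_le_mul_rpow_of_le_mul {x y k p : ℝ} (hx : 0 ≤ x) (hy : 0 ≤ y) (hk : 0 ≤ k)
    (hp : 0 ≤ p) (h : x ≤ k * y) : x ^ p ≤ k ^ p * y ^ p :=
  (rpow_le_rpow hx h hp).trans_eq (mul_rpow hk hy)

theorem statement12_general (q s C : ℝ) (hq : 0 < q) (hs : 0 < s) :
    ∃ C₁ C₂ : ℝ, 0 < C₁ ∧ 0 < C₂ ∧
      ∀ N M : ℕ, 0 < N → N ≤ M → (M : ℝ) ≤ C * N →
      ∀ f : ℂ → ℂ, DifferentiableOn ℂ f (Metric.ball 0 1) →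
      ∀ r : ℝ, 0 ≤ r → r < 1 →
        C₁ * (∑ l ∈ Finset.range N, blockMean s r f N l ^ q) ^ (1/q)
            ≤ (∑ l ∈ Finset.range M, blockMean s r f M l ^ q) ^ (1/q) ∧
        (∑ l ∈ Finset.range M, blockMean s r f M l ^ q) ^ (1/q)
            ≤ C₂ * (∑ l ∈ Finset.range N, blockMean s r f N l ^ q) ^ (1/q) := by
  set D := ⌈C⌉₊
  refine ⟨((((D : ℝ) + 1) ^ (q / s) * 2) ^ (1 / q))⁻¹,
    ((2 : ℝ) ^ (q / s) * ((D : ℝ) + 1)) ^ (1 / q), by positivity, by positivity, ?_⟩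
  intro N M _ hNM hMC f hf r hr₀ hr₁
  simp only [blockMean_rpow_eq]
  set g := fun θ => ‖f (cpt r θ)‖ ^ s / (2 * π)
  have hg₀ : 0 ≤ g := fun θ => by positivity
  have hg : LocallyIntegrable g := by
    have hfc : Continuous fun θ => f (cpt r θ) := hf.continuousOn.comp_continuous
      (continuous_cpt r) fun θ => by simpa [norm_cpt hr₀] using hr₁
    exact ((hfc.norm.rpow_const fun _ => Or.inr hs.le).div_const _).locallyIntegrable
  have hMD : M ≤ D * N := by
    have : (M : ℝ) ≤ D * N := hMC.trans (by gcongr; exact Nat.le_ceil C)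
    exact_mod_cast this
  have hup := sum_arcIntegral_rpow_le hg₀ hg (div_pos hq hs) hMD (b := 1) (by omega)
  have hdown := sum_arcIntegral_rpow_le hg₀ hg (div_pos hq hs) (a := 1) (by omega) hMD
  rw [Nat.cast_one, one_add_one_eq_two] at hup hdown
  have hSN := sum_nonneg fun l (_ : l ∈ range N) =>
    rpow_nonneg (arcIntegral_nonneg hg₀ N l) (q / s)
  have hSM := sum_nonneg fun l (_ : l ∈ range M) =>
    rpow_nonneg (arcIntegral_nonneg hg₀ M l) (q / s)
  constructor
  · rw [inv_mul_le_iff₀ (by positivity)]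
    exact rpow_le_mul_rpow_of_le_mul hSN hSM (by positivity) (by positivity) hdown
  · exact rpow_le_mul_rpow_of_le_mul hSM hSN (by positivity) (by positivity) hup

/-- for `0 < q, s < ∞` and `C ≥ 1` there are `C₁, C₂ > 0` such that
whenever `N ≤ M ≤ C·N`, the `ℓ^q` norms of the block means with `N` and with `M` arcs
are comparable, for every analytic `f` and every `0 ≤ r < 1`. -/
theorem statement12 (q s C : ℝ) (hq : 0 < q) (hs : 0 < s) (hC : 1 ≤ C) :
    ∃ C₁ C₂ : ℝ, 0 < C₁ ∧ 0 < C₂ ∧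
      ∀ N M : ℕ, 0 < N → N ≤ M → (M : ℝ) ≤ C * N →
      ∀ f : ℂ → ℂ, DifferentiableOn ℂ f (Metric.ball 0 1) →
      ∀ r : ℝ, 0 ≤ r → r < 1 →
        C₁ * (∑ l ∈ Finset.range N, blockMean s r f N l ^ q) ^ (1/q)
            ≤ (∑ l ∈ Finset.range M, blockMean s r f M l ^ q) ^ (1/q) ∧
        (∑ l ∈ Finset.range M, blockMean s r f M l ^ q) ^ (1/q)
            ≤ C₂ * (∑ l ∈ Finset.range N, blockMean s r f N l ^ q) ^ (1/q) :=
  statement12_general q s C hq hs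
end
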